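/- Let h : (0,∞) → (0,∞) be continuous with lim_{τ→0+} h(τ) = 0 and lim_{τ→0+} τ/h(τ) = 0, and fix a real u ≠ 0. Then A(u/h(τ), τ) = O((τ/h(τ))²) as τ → 0+. -/

import Mathlib

open Filter Topology Asymptotics MeasureTheory

set_option linter.unusedVariables false

noncomputable section


/-- sign convention of the paper: 1 if `0 ≤ x`, -1 otherwise. -/
def sgn' (x : ℝ) : ℝ := if 0 ≤ x then 1 else -1

/-- principal-branch complex square root `d` of the Heston Riccati discriminant. -/
def hestD (κ ρ ξ : ℝ) (w : ℂ) : ℂ :=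
  (((κ : ℂ) - (ρ : ℂ) * (ξ : ℂ) * w) ^ 2 + w * (1 - w) * (ξ : ℂ) ^ 2) ^ ((1 : ℂ) / 2)

def hestGamma (κ ρ ξ : ℝ) (w : ℂ) : ℂ :=
  ((κ : ℂ) - (ρ : ℂ) * (ξ : ℂ) * w - hestD κ ρ ξ w) /
    ((κ : ℂ) - (ρ : ℂ) * (ξ : ℂ) * w + hestD κ ρ ξ w)

def hestB (κ ρ ξ : ℝ) (w : ℂ) (τ : ℝ) : ℂ :=
  (((κ : ℂ) - (ρ : ℂ) * (ξ : ℂ) * w - hestD κ ρ ξ w) / (ξ : ℂ) ^ 2) *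
    ((1 - Complex.exp (-(hestD κ ρ ξ w) * (τ : ℂ))) /
      (1 - hestGamma κ ρ ξ w * Complex.exp (-(hestD κ ρ ξ w) * (τ : ℂ))))

def hestA (κ θ ρ ξ : ℝ) (w : ℂ) (τ : ℝ) : ℂ :=
  ((κ * θ / ξ ^ 2 : ℝ) : ℂ) *
    (((κ : ℂ) - (ρ : ℂ) * (ξ : ℂ) * w - hestD κ ρ ξ w) * (τ : ℂ) -
      2 * Complex.log ((1 - hestGamma κ ρ ξ w * Complex.exp (-(hestD κ ρ ξ w) * (τ : ℂ))) /
        (1 - hestGamma κ ρ ξ w)))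

def betaT (κ ξ t : ℝ) : ℝ := ξ ^ 2 * (1 - Real.exp (-(κ * t))) / (4 * κ)

/-- explicit Heston forward log-mgf `G_τ(w)`. -/
def hestG (κ θ ξ v ρ t : ℝ) (w : ℂ) (τ : ℝ) : ℂ :=
  hestA κ θ ρ ξ w τ +
    hestB κ ρ ξ w τ * (v : ℂ) * ((Real.exp (-(κ * t)) : ℝ) : ℂ) /
      (1 - 2 * (betaT κ ξ t : ℂ) * hestB κ ρ ξ w τ) -
    ((2 * κ * θ / ξ ^ 2 : ℝ) : ℂ) *
      Complex.log (1 - 2 * (betaT κ ξ t : ℂ) * hestB κ ρ ξ w τ)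

/-- rescaled forward log-mgf, for complex argument. -/
def hestLambdaC (κ θ ξ v ρ t τ : ℝ) (z : ℂ) : ℂ :=
  ((Real.sqrt τ : ℝ) : ℂ) * hestG κ θ ξ v ρ t (z / ((Real.sqrt τ : ℝ) : ℂ)) τ

/-- rescaled forward log-mgf `Λ_τ(u) = √τ · G_τ(u/√τ)`. -/
def hestLambda (κ θ ξ v ρ t τ : ℝ) (u : ℝ) : ℂ :=
  hestLambdaC κ θ ξ v ρ t τ (u : ℂ)

/-- `D_{t,τ}`: the maximal open interval containing `0` on which `Λ_τ` is real-valued. -/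
def hestDom (κ θ ξ v ρ t τ : ℝ) : Set ℝ :=
  connectedComponentIn (interior {u : ℝ | (hestLambda κ θ ξ v ρ t τ u).im = 0}) 0


/-! For real `w` the discriminant `d(w)² = -(1 - ρ²) ξ² w² + O(w)` is negative once `|w|` is
large, so `‖d(w)‖ ≍ |w|` and `m + d ≠ 0` for `m = κ - ρξw`. The logarithm's argument is `1 + z`
with `z = (m - d)(1 - e^{-dτ}) / (2d) = O(|w|τ)`, and the first-order terms cancel:
`(m - d)τ - 2 log(1 + z) = (m - d)/d · (e^{-dτ} - 1 + dτ) - 2 (log(1 + z) - z) = O((|w|τ)²)`.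
Along `w = u / h(τ)` we have `|w| → ∞` and `|w|τ = |u| τ / h(τ) → 0`. -/

/-- `hestA κ θ ρ ξ w τ` is definitionally `κθ/ξ² * riccatiA (κ - ρξw) (hestD κ ρ ξ w) τ`. -/
def riccatiA (m d τ : ℂ) : ℂ :=
  (m - d) * τ - 2 * Complex.log
    ((1 - (m - d) / (m + d) * Complex.exp (-d * τ)) / (1 - (m - d) / (m + d)))

lemma one_sub_div_mul_div_one_sub_div {K : Type*} [Field K] [CharZero K] {m d : K}
    (hd : d ≠ 0) (hmd : m + d ≠ 0) (e : K) :
    (1 - (m - d) / (m + d) * e) / (1 - (m - d) / (m + d)) =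
      1 + (m - d) * (1 - e) / (2 * d) := by
  have h2d : 1 - (m - d) / (m + d) = 2 * d / (m + d) := by field_simp; ring
  rw [h2d]
  field_simp
  ring

lemma riccatiA_eq {m d : ℂ} (hd : d ≠ 0) (hmd : m + d ≠ 0) (τ : ℂ) :
    riccatiA m d τ =
      (m - d) / d * (Complex.exp (-(d * τ)) - 1 - -(d * τ)) -
        2 * (Complex.log (1 + (m - d) * (1 - Complex.exp (-(d * τ))) / (2 * d)) -
          (m - d) * (1 - Complex.exp (-(d * τ))) / (2 * d)) := by
  rw [riccatiA, one_sub_div_mul_div_one_sub_div hd hmd, neg_mul]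
  field_simp
  ring

lemma norm_riccatiA_le {m d τ : ℂ} {C : ℝ} (hd : d ≠ 0) (hmd : m + d ≠ 0)
    (hC : ‖m - d‖ ≤ C * ‖d‖) (hs : ‖d * τ‖ ≤ 1) (hCs : C * ‖d * τ‖ ≤ 1 / 2) :
    ‖riccatiA m d τ‖ ≤ (C + 2 * C ^ 2) * ‖d * τ‖ ^ 2 := by
  set s := ‖d * τ‖
  set z := (m - d) * (1 - Complex.exp (-(d * τ))) / (2 * d)
  have hd' : 0 < ‖d‖ := norm_pos_iff.mpr hd
  have hC0 : 0 ≤ C := nonneg_of_mul_nonneg_left ((norm_nonneg _).trans hC) hd'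
  have hs' : ‖-(d * τ)‖ ≤ 1 := by rwa [norm_neg]
  have hexp : ‖Complex.exp (-(d * τ)) - 1 - -(d * τ)‖ ≤ s ^ 2 := by
    simpa only [norm_neg] using Complex.norm_exp_sub_one_sub_id_le hs'
  have hz : ‖z‖ ≤ C * s := by
    have h1e : ‖1 - Complex.exp (-(d * τ))‖ ≤ 2 * s := by
      simpa only [norm_sub_rev, norm_neg] using Complex.norm_exp_sub_one_le hs'
    calc ‖z‖ = ‖m - d‖ * ‖1 - Complex.exp (-(d * τ))‖ / (2 * ‖d‖) := by
          simp only [z, norm_div, norm_mul, Complex.norm_ofNat]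
      _ ≤ C * ‖d‖ * (2 * s) / (2 * ‖d‖) := by gcongr
      _ = C * s := by field_simp
  have hlog : ‖Complex.log (1 + z) - z‖ ≤ (C * s) ^ 2 := by
    have hz1 : ‖z‖ ≤ 1 / 2 := hz.trans hCs
    calc ‖Complex.log (1 + z) - z‖ ≤ ‖z‖ ^ 2 * (1 - ‖z‖)⁻¹ / 2 :=
          Complex.norm_log_one_add_sub_self_le (by linarith)
      _ ≤ ‖z‖ ^ 2 * 2 / 2 := by
          gcongr
          rw [inv_le_comm₀ (by linarith) (by norm_num)]
          linarith
      _ ≤ (C * s) ^ 2 := by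
          rw [mul_div_cancel_right₀ _ two_ne_zero]
          gcongr
  have hmd_d : ‖(m - d) / d‖ ≤ C := by
    rw [norm_div]
    exact (div_le_iff₀ hd').mpr hC
  rw [riccatiA_eq hd hmd]
  calc _ ≤ ‖(m - d) / d‖ * ‖Complex.exp (-(d * τ)) - 1 - -(d * τ)‖ +
        2 * ‖Complex.log (1 + z) - z‖ := by
        refine (norm_sub_le _ _).trans ?_
        simp only [norm_mul, Complex.norm_ofNat]
        exact le_rfl
    _ ≤ C * s ^ 2 + 2 * (C * s) ^ 2 := by gcongr
    _ = (C + 2 * C ^ 2) * s ^ 2 := by ring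

def hestDisc (κ ρ ξ w : ℝ) : ℝ := (κ - ρ * ξ * w) ^ 2 + w * (1 - w) * ξ ^ 2

lemma hestD_sq (κ ρ ξ w : ℝ) : hestD κ ρ ξ w ^ 2 = hestDisc κ ρ ξ w := by
  have h : (1 : ℂ) / 2 = ((2 : ℕ) : ℂ)⁻¹ := by norm_num
  rw [hestD, h, Complex.cpow_nat_inv_pow _ two_ne_zero, hestDisc]
  push_cast
  ring

lemma norm_hestD_sq (κ ρ ξ w : ℝ) : ‖hestD κ ρ ξ w‖ ^ 2 = |hestDisc κ ρ ξ w| := by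
  rw [← norm_pow, hestD_sq, Complex.norm_real, Real.norm_eq_abs]

lemma exists_hestDisc_bounds (κ : ℝ) {ρ ξ : ℝ} (hξ : ξ ≠ 0) (hρ : |ρ| < 1) :
    ∃ W₀ c K : ℝ, 1 ≤ W₀ ∧ 0 < c ∧ 0 < K ∧ ∀ w, W₀ ≤ |w| →
      c * w ^ 2 ≤ -hestDisc κ ρ ξ w ∧ -hestDisc κ ρ ξ w ≤ K * w ^ 2 := by
  set a := (1 - ρ ^ 2) * ξ ^ 2
  set b := ξ ^ 2 - 2 * κ * ρ * ξ
  have ha : 0 < a := by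
    have : ρ ^ 2 < 1 := (sq_lt_one_iff_abs_lt_one ρ).mpr hρ
    have : 0 < 1 - ρ ^ 2 := by linarith
    positivity
  refine ⟨max 1 (2 * (|b| + κ ^ 2) / a), a / 2, a + |b|, le_max_left _ _, by positivity,
    by positivity, fun w hw => ?_⟩
  have hw1 : 1 ≤ |w| := (le_max_left _ _).trans hw
  have hwa : 2 * (|b| + κ ^ 2) ≤ a * |w| := by
    have := (le_max_right _ _).trans hw
    rw [div_le_iff₀ ha] at this
    linarith
  have hdisc : -hestDisc κ ρ ξ w = a * |w| ^ 2 - b * w - κ ^ 2 := by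
    rw [sq_abs]
    simp only [hestDisc, a, b]
    ring
  have hbw : |b * w| = |b| * |w| := abs_mul b w
  rw [hdisc, ← sq_abs w]
  constructor
  · nlinarith [mul_le_mul_of_nonneg_left hwa (abs_nonneg w), le_abs_self (b * w),
      mul_le_mul_of_nonneg_left hw1 (sq_nonneg κ)]
  · nlinarith [neg_abs_le (b * w), mul_le_mul_of_nonneg_left hw1 (mul_nonneg (abs_nonneg b)
      (abs_nonneg w)), sq_nonneg κ]

lemma exists_hestD_bounds (κ : ℝ) {ρ ξ : ℝ} (hξ : ξ ≠ 0) (hρ : |ρ| < 1) :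
    ∃ W₀ C K : ℝ, 0 ≤ C ∧ 0 < K ∧ ∀ w : ℝ, W₀ ≤ |w| →
      hestD κ ρ ξ w ≠ 0 ∧ (κ - ρ * ξ * w : ℂ) + hestD κ ρ ξ w ≠ 0 ∧
      ‖(κ - ρ * ξ * w : ℂ) - hestD κ ρ ξ w‖ ≤ C * ‖hestD κ ρ ξ w‖ ∧
      ‖hestD κ ρ ξ w‖ ≤ K * |w| := by
  obtain ⟨W₀, c, K, hW₀, hc, hK, hdisc⟩ := exists_hestDisc_bounds κ hξ hρ
  refine ⟨W₀, (|κ| + |ξ|) / √c + 1, √K, by positivity, by positivity, fun w hw => ?_⟩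
  obtain ⟨hlo, hhi⟩ := hdisc w hw
  set d := hestD κ ρ ξ w
  have hw1 : 1 ≤ |w| := hW₀.trans hw
  have hw2 : 0 < w ^ 2 := by rw [← sq_abs]; positivity
  have hneg : hestDisc κ ρ ξ w < 0 := by nlinarith [mul_pos hc hw2]
  have hd_sq : ‖d‖ ^ 2 = -hestDisc κ ρ ξ w := by rw [norm_hestD_sq, abs_of_neg hneg]
  have hd_lo : √c * |w| ≤ ‖d‖ := by
    rwa [← sq_le_sq₀ (by positivity) (norm_nonneg _), mul_pow, Real.sq_sqrt hc.le, sq_abs,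
      hd_sq]
  have hd_hi : ‖d‖ ≤ √K * |w| := by
    rwa [← sq_le_sq₀ (norm_nonneg _) (by positivity), mul_pow, Real.sq_sqrt hK.le, sq_abs,
      hd_sq]
  have hm : ‖(κ - ρ * ξ * w : ℂ)‖ ≤ (|κ| + |ξ|) * |w| := by
    have hρ1 : |ρ| ≤ 1 := hρ.le
    rw [← Complex.ofReal_mul, ← Complex.ofReal_mul, ← Complex.ofReal_sub, Complex.norm_real,
      Real.norm_eq_abs]
    calc |κ - ρ * ξ * w| ≤ |κ| + |ρ| * |ξ| * |w| := by
          rw [← abs_mul, ← abs_mul]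
          exact abs_sub _ _
      _ ≤ |κ| * |w| + 1 * |ξ| * |w| := by
          gcongr
          exact le_mul_of_one_le_right (abs_nonneg κ) hw1
      _ = (|κ| + |ξ|) * |w| := by ring
  refine ⟨norm_pos_iff.mp (lt_of_lt_of_le (by positivity) hd_lo), fun h => ?_, ?_, hd_hi⟩
  · -- `d ^ 2 = m ^ 2` would make the negative discriminant a real square.
    have hsq : ((hestDisc κ ρ ξ w : ℝ) : ℂ) = ((κ - ρ * ξ * w) ^ 2 : ℝ) := by
      rw [← hestD_sq, show hestD κ ρ ξ w = d from rfl, eq_neg_of_add_eq_zero_right h]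
      push_cast
      ring
    nlinarith [Complex.ofReal_injective hsq, sq_nonneg (κ - ρ * ξ * w)]
  · calc ‖(κ - ρ * ξ * w : ℂ) - d‖ ≤ (|κ| + |ξ|) * |w| + ‖d‖ :=
          (norm_sub_le _ _).trans (by gcongr)
      _ = (|κ| + |ξ|) / √c * (√c * |w|) + ‖d‖ := by field_simp
      _ ≤ (|κ| + |ξ|) / √c * ‖d‖ + ‖d‖ := by gcongr
      _ = ((|κ| + |ξ|) / √c + 1) * ‖d‖ := by ring

lemma exists_norm_hestA_le (κ θ : ℝ) {ρ ξ : ℝ} (hξ : ξ ≠ 0) (hρ : |ρ| < 1) :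
    ∃ W₀ ε M : ℝ, 0 < ε ∧ ∀ w τ : ℝ, 0 ≤ τ → W₀ ≤ |w| → |w| * τ ≤ ε →
      ‖hestA κ θ ρ ξ w τ‖ ≤ M * (|w| * τ) ^ 2 := by
  obtain ⟨W₀, C, K, hC, hK, hD⟩ := exists_hestD_bounds κ hξ hρ
  refine ⟨W₀, 1 / (2 * K * (1 + C)), |κ * θ / ξ ^ 2| * (C + 2 * C ^ 2) * K ^ 2, by positivity,
    fun w τ hτ hw hwτ => ?_⟩
  obtain ⟨hd, hmd, hmd_le, hd_le⟩ := hD w hw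
  set s := ‖hestD κ ρ ξ w * τ‖ with hs_def
  have hs : s ≤ K * (|w| * τ) := by
    rw [hs_def, norm_mul, Complex.norm_real, Real.norm_of_nonneg hτ, ← mul_assoc]
    gcongr
  have hs_half : (1 + C) * s ≤ 1 / 2 := by
    calc (1 + C) * s ≤ (1 + C) * (K * (1 / (2 * K * (1 + C)))) := by
          gcongr
          exact hs.trans (by gcongr)
      _ = 1 / 2 := by field_simp
  have hCs : 0 ≤ C * s := by positivity
  have hR := norm_riccatiA_le (τ := τ) hd hmd hmd_le (by nlinarith) (by nlinarith)
  calc ‖hestA κ θ ρ ξ w τ‖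
        = |κ * θ / ξ ^ 2| * ‖riccatiA (κ - ρ * ξ * w) (hestD κ ρ ξ w) τ‖ := by
        rw [← Real.norm_eq_abs, ← Complex.norm_real, ← norm_mul]
        rfl
    _ ≤ |κ * θ / ξ ^ 2| * ((C + 2 * C ^ 2) * (K * (|w| * τ)) ^ 2) := by
        gcongr
        exact hR.trans (by gcongr)
    _ = |κ * θ / ξ ^ 2| * (C + 2 * C ^ 2) * K ^ 2 * (|w| * τ) ^ 2 := by ring

theorem stmt6_general (κ θ ξ ρ : ℝ) (hξ : 0 < ξ)
    (hρ : ρ ∈ Set.Ioo (-1 : ℝ) 1)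
    (h : ℝ → ℝ) (hpos : ∀ τ ∈ Set.Ioi (0 : ℝ), 0 < h τ)
    (hlim : Tendsto h (𝓝[>] (0 : ℝ)) (𝓝 0))
    (hrat : Tendsto (fun τ : ℝ => τ / h τ) (𝓝[>] (0 : ℝ)) (𝓝 0))
    (u : ℝ) (hu : u ≠ 0) :
    (fun τ : ℝ => hestA κ θ ρ ξ ((u : ℂ) / ((h τ : ℝ) : ℂ)) τ)
      =O[𝓝[>] (0 : ℝ)] fun τ : ℝ => (τ / h τ) ^ 2 := by
  obtain ⟨W₀, ε, M, hε, hA⟩ := exists_norm_hestA_le κ θ hξ.ne' (abs_lt.mpr hρ)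
  have hpos' : ∀ᶠ τ in 𝓝[>] (0 : ℝ), 0 < h τ := eventually_nhdsWithin_of_forall hpos
  have habs : ∀ᶠ τ in 𝓝[>] (0 : ℝ), |u / h τ| = |u| * (h τ)⁻¹ := by
    filter_upwards [hpos'] with τ hτ
    rw [abs_div, abs_of_pos hτ, div_eq_mul_inv]
  have hw_large : ∀ᶠ τ in 𝓝[>] (0 : ℝ), W₀ ≤ |u / h τ| := by
    have hh : Tendsto h (𝓝[>] 0) (𝓝[>] 0) := tendsto_nhdsWithin_iff.mpr ⟨hlim, hpos'⟩
    have := (tendsto_inv_nhdsGT_zero.comp hh).const_mul_atTop (abs_pos.mpr hu)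
    filter_upwards [this.eventually_ge_atTop W₀, habs] with τ hτ hτ'
    rwa [hτ']
  have hwτ_small : ∀ᶠ τ in 𝓝[>] (0 : ℝ), |u / h τ| * τ ≤ ε := by
    have := hrat.const_mul |u|
    rw [mul_zero] at this
    filter_upwards [this.eventually_le_const hε, habs] with τ hτ hτ'
    rwa [hτ', mul_assoc, inv_mul_eq_div]
  refine IsBigO.of_bound (M * u ^ 2) ?_
  filter_upwards [self_mem_nhdsWithin, hw_large, hwτ_small, habs] with τ hτ hw hwτ hτ'
  have hcast : (u : ℂ) / ((h τ : ℝ) : ℂ) = ((u / h τ : ℝ) : ℂ) := by push_cast; rfl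
  rw [hcast, norm_pow, Real.norm_eq_abs, sq_abs]
  calc _ ≤ M * (|u / h τ| * τ) ^ 2 := hA _ _ (le_of_lt hτ) hw hwτ
    _ = M * u ^ 2 * (τ / h τ) ^ 2 := by rw [hτ', ← sq_abs u]; ring

theorem stmt6 (κ θ ξ v ρ t : ℝ) (hκ : 0 < κ) (hθ : 0 < θ) (hξ : 0 < ξ)
    (hv : 0 < v) (hρ : ρ ∈ Set.Ioo (-1 : ℝ) 1) (ht : 0 < t)
    (h : ℝ → ℝ) (hpos : ∀ τ ∈ Set.Ioi (0 : ℝ), 0 < h τ)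
    (hcont : ContinuousOn h (Set.Ioi 0))
    (hlim : Tendsto h (𝓝[>] (0 : ℝ)) (𝓝 0))
    (hrat : Tendsto (fun τ : ℝ => τ / h τ) (𝓝[>] (0 : ℝ)) (𝓝 0))
    (u : ℝ) (hu : u ≠ 0) :
    (fun τ : ℝ => hestA κ θ ρ ξ ((u : ℂ) / ((h τ : ℝ) : ℂ)) τ)
      =O[𝓝[>] (0 : ℝ)] fun τ : ℝ => (τ / h τ) ^ 2 :=
  stmt6_general κ θ ξ ρ hξ hρ h hpos hlim hrat u hu
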